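/- Deterministic decryption correctness for the integer-lattice PKEET: let q ≥ 3 be an odd integer and n, N, t ≥ 1. Let F be an n×N matrix and U an n×t matrix over ℤ/qℤ, and let E be an N×t integer matrix whose reduction Ē modulo q satisfies F·Ē = U. Let s ∈ (ℤ/qℤ)^n, let x ∈ ℤ^t and y ∈ ℤ^N be integer noise vectors, and let m ∈ {0,1}^t. Set c1 := Uᵀ·s + x̄ + ⌊q/2⌋·m̄ and c3 := Fᵀ·s + ȳ over ℤ/qℤ (bars denoting reduction mod q). Suppose that for every j, 4·|x_j − (Eᵀ·y)_j| < q − 1. Then for every j, the j-th coordinate of w := c1 − Ēᵀ·c3 is closer to ⌊q/2⌋ than to 0 in cyclic distance on ℤ/qℤ if and only if m_j = 1; consequently the coordinatewise rounding procedure recovers the message m exactly. -/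
import Mathlib

lemma vma_intCast (q : ℕ) [NeZero q] (a : ℤ) (h1 : -(q:ℤ) < 2*a) (h2 : 2*a ≤ q) :
    ((a : ZMod q)).valMinAbs = a := by
  rw [ZMod.valMinAbs_spec]
  exact ⟨rfl, by constructor <;> linarith⟩

lemma vma_intCast' (q : ℕ) [NeZero q] (a b : ℤ) (hd : (q:ℤ) ∣ (a - b))
    (h1 : -(q:ℤ) < 2*b) (h2 : 2*b ≤ q) : ((a : ZMod q)).valMinAbs = b := by
  have hab : ((a : ZMod q)) = ((b : ZMod q)) := by
    have := (ZMod.intCast_zmod_eq_zero_iff_dvd (a - b) q).2 hd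
    push_cast at this
    linear_combination this
  rw [hab]; exact vma_intCast q b h1 h2

/-- Deterministic decryption correctness for the integer-lattice
PKEET: if `F·Ē = U`, `c1 = Uᵀ·s + x̄ + ⌊q/2⌋·m̄`, `c3 = Fᵀ·s + ȳ` and the noise
satisfies `4·|x_j − (Eᵀ·y)_j| < q − 1` for all `j`, then for every `j` the
coordinate `w_j` of `w = c1 − Ēᵀ·c3` is closer to `⌊q/2⌋` than to `0` in cyclic
distance if and only if `m_j = 1`; hence rounding recovers `m` exactly. -/
theorem pkeet_decryption_correct (q n N t : ℕ) [NeZero q] (hq3 : 3 ≤ q)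
    (hodd : Odd q) (hn : 1 ≤ n) (hN : 1 ≤ N) (ht : 1 ≤ t)
    (F : Matrix (Fin n) (Fin N) (ZMod q)) (U : Matrix (Fin n) (Fin t) (ZMod q))
    (E : Matrix (Fin N) (Fin t) ℤ)
    (hFE : F * E.map (fun z => (z : ZMod q)) = U)
    (s : Fin n → ZMod q) (x : Fin t → ℤ) (y : Fin N → ℤ)
    (m : Fin t → ℤ) (hm : ∀ j, m j = 0 ∨ m j = 1)
    (c1 : Fin t → ZMod q)
    (hc1 : c1 = U.transpose.mulVec s + (fun j => (x j : ZMod q)) +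
      fun j => (((q : ℤ) / 2 : ℤ) : ZMod q) * (m j : ZMod q))
    (c3 : Fin N → ZMod q)
    (hc3 : c3 = F.transpose.mulVec s + fun i => (y i : ZMod q))
    (hnoise : ∀ j, 4 * |x j - (E.transpose.mulVec y) j| < (q : ℤ) - 1)
    (w : Fin t → ZMod q)
    (hw : w = c1 - (E.map (fun z => (z : ZMod q))).transpose.mulVec c3) :
    ∀ j : Fin t,
      ((w j - (((q : ℤ) / 2 : ℤ) : ZMod q)).valMinAbs.natAbs <
        (w j - ((0 : ℤ) : ZMod q)).valMinAbs.natAbs) ↔ m j = 1 := by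
  intro j
  obtain ⟨k, hk⟩ := hodd
  have hk' : (q:ℤ) = 2*k + 1 := by exact_mod_cast hk
  have hq2 : ((q:ℤ)/2) = (k:ℤ) := by omega
  set e : ℤ := x j - E.transpose.mulVec y j with he
  have hE : 4*e < (q:ℤ) - 1 ∧ -(4*e) < (q:ℤ) - 1 := by
    have h0 := hnoise j
    rw [← he] at h0
    constructor <;> [linarith [le_abs_self e]; linarith [neg_abs_le e]]
  -- compute w j
  have hwj : w j = ((e + k * m j : ℤ) : ZMod q) := by
    subst hw hc1 hc3
    simp only [Matrix.mulVec_add, Pi.add_apply, Pi.sub_apply]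
    have hmv : ((E.map (fun z => ((z:ℤ) : ZMod q))).transpose.mulVec
        (F.transpose.mulVec s)) j = (U.transpose.mulVec s) j := by
      rw [Matrix.mulVec_mulVec, ← Matrix.transpose_mul, hFE]
    have hyv : ((E.map (fun z => ((z:ℤ) : ZMod q))).transpose.mulVec
        (fun i => (y i : ZMod q))) j = ((E.transpose.mulVec y j : ℤ) : ZMod q) := by
      rw [← Matrix.transpose_map]
      exact (RingHom.map_mulVec (Int.castRingHom (ZMod q)) E.transpose y j).symm
    rw [hmv, hyv, hq2, he]
    push_cast
    ring
  rw [hwj, hq2]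
  have hcast : ∀ a b : ℤ, ((a : ZMod q)) - ((b : ZMod q)) = ((a - b : ℤ) : ZMod q) := by
    intro a b; push_cast; ring
  rw [hcast, hcast, sub_zero]
  rcases hm j with hm0 | hm1
  · rw [hm0]
    simp only [mul_zero, add_zero]
    have hB : ((e : ZMod q)).valMinAbs = e := by
      apply vma_intCast <;> omega
    rw [hB]
    by_cases hA : -(q:ℤ) < 2*(e - k)
    · have : (((e - (k:ℤ) : ℤ) : ZMod q)).valMinAbs = e - k := by
        apply vma_intCast <;> omega
      rw [this]
      constructor
      · intro h; exfalso; omega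
      · intro h; omega
    · have : (((e - k : ℤ) : ZMod q)).valMinAbs = e + k + 1 := by
        apply vma_intCast' q _ _ ⟨-1, by omega⟩ <;> omega
      rw [this]
      constructor
      · intro h; exfalso; omega
      · intro h; omega
  · rw [hm1]
    simp only [mul_one]
    have hA : (((e + k - k : ℤ) : ZMod q)).valMinAbs = e := by
      rw [show (e + (k:ℤ) - k) = e by ring]
      apply vma_intCast <;> omega
    rw [hA]
    by_cases hB : 2*(e + k) ≤ (q:ℤ)
    · have : (((e + k : ℤ) : ZMod q)).valMinAbs = e + k := by
        apply vma_intCast <;> omega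
      rw [this]
      simp only [iff_true]
      omega
    · have : (((e + k : ℤ) : ZMod q)).valMinAbs = e - k - 1 := by
        apply vma_intCast' q _ _ ⟨1, by omega⟩ <;> omega
      rw [this]
      simp only [iff_true]
      omega
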